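/- arXiv:2410.19626 — 2 statements merged into one kernel-verified Lean document; each statement's English description precedes it below -/
import Mathlib

section
/- Let (B, g_B) and (F, g_F) be Riemannian manifolds with warped product metric g_f = π*g_B + (f∘π)² σ*g_F on B × F, where f > 0 on B. If (∇_B, ∇_B*) and (∇_F, ∇_F*) are torsion-free dual structures on (B,g_B) and (F,g_F) respectively, then the lifted connections (∇_f, ∇_f*), defined by the warped product lifting formulas, form a torsion-free dual structure on (B ×_f F, g_f). -/
section Aux

theorem bilin_zero {R V W : Type*} [CommRing R] [AddCommGroup V] [Module R V]
    [AddCommGroup W] [Module R W]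
    {s : Set V} (hs : Submodule.span R s = ⊤) (P : V → V → W)
    (hadd1 : ∀ x y z : V, P (x + y) z = P x z + P y z)
    (hsmul1 : ∀ (a : R) (x z : V), P (a • x) z = a • P x z)
    (hadd2 : ∀ x y z : V, P x (y + z) = P x y + P x z)
    (hsmul2 : ∀ (a : R) (x z : V), P x (a • z) = a • P x z)
    (hgen : ∀ x ∈ s, ∀ y ∈ s, P x y = 0) :
    ∀ x y : V, P x y = 0 := by
  have key : ∀ y ∈ s, ∀ x : V, P x y = 0 := by
    intro y hy x
    have hx : x ∈ Submodule.span R s := by rw [hs]; trivial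
    induction hx using Submodule.span_induction with
    | mem z hz => exact hgen z hz y hy
    | zero =>
      have h0 : P ((0 : R) • y) y = (0 : R) • P y y := hsmul1 0 y y
      simpa using h0
    | add a b _ _ ha hb => rw [hadd1, ha, hb, add_zero]
    | smul a x _ hx => rw [hsmul1, hx, smul_zero]
  intro x y
  have hy : y ∈ Submodule.span R s := by rw [hs]; trivial
  induction hy using Submodule.span_induction with
  | mem z hz => exact key z hz x
  | zero =>
    have h0 : P x ((0 : R) • x) = (0 : R) • P x x := hsmul2 0 x x
    simpa using h0
  | add a b _ _ ha hb => rw [hadd2, ha, hb, add_zero]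
  | smul a z _ hz => rw [hsmul2, hz, smul_zero]

theorem trilin_zero {R V : Type*} [CommRing R] [AddCommGroup V] [Module R V]
    {s : Set V} (hs : Submodule.span R s = ⊤) (S : V → V → V → R)
    (haddZ : ∀ z z' x y : V, S (z + z') x y = S z x y + S z' x y)
    (hsmulZ : ∀ (a : R) (z x y : V), S (a • z) x y = a * S z x y)
    (haddX : ∀ z x x' y : V, S z (x + x') y = S z x y + S z x' y)
    (hsmulX : ∀ (a : R) (z x y : V), S z (a • x) y = a * S z x y)
    (haddY : ∀ z x y y' : V, S z x (y + y') = S z x y + S z x y')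
    (hsmulY : ∀ (a : R) (z x y : V), S z x (a • y) = a * S z x y)
    (hgen : ∀ z ∈ s, ∀ x ∈ s, ∀ y ∈ s, S z x y = 0) :
    ∀ z x y : V, S z x y = 0 := by
  have key1 : ∀ z ∈ s, ∀ x ∈ s, ∀ y : V, S z x y = 0 := by
    intro z hz x hx y
    have hy : y ∈ Submodule.span R s := by rw [hs]; trivial
    induction hy using Submodule.span_induction with
    | mem w hw => exact hgen z hz x hx w hw
    | zero =>
      have h0 : S z x ((0 : R) • x) = 0 * S z x x := hsmulY 0 z x x
      simpa using h0
    | add a b _ _ ha hb => rw [haddY, ha, hb, add_zero]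
    | smul a w _ hw => rw [hsmulY, hw, mul_zero]
  have key2 : ∀ z ∈ s, ∀ x y : V, S z x y = 0 := by
    intro z hz x y
    have hx : x ∈ Submodule.span R s := by rw [hs]; trivial
    induction hx using Submodule.span_induction with
    | mem w hw => exact key1 z hz w hw y
    | zero =>
      have h0 : S z ((0 : R) • z) y = 0 * S z z y := hsmulX 0 z z y
      simpa using h0
    | add a b _ _ ha hb => rw [haddX, ha, hb, add_zero]
    | smul a w _ hw => rw [hsmulX, hw, mul_zero]
  intro z x y
  have hz : z ∈ Submodule.span R s := by rw [hs]; trivial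
  induction hz using Submodule.span_induction with
  | mem w hw => exact key2 w hw x y
  | zero =>
    have h0 : S ((0 : R) • x) x y = 0 * S x x y := hsmulZ 0 x x y
    simpa using h0
  | add a b _ _ ha hb => rw [haddZ, ha, hb, add_zero]
  | smul a w _ hw => rw [hsmulZ, hw, mul_zero]

end Aux



def IsDerivAction {R : Type*} [CommRing R] {V : Type*} [AddCommGroup V] [Module R V]
    (act : V → R → R) : Prop :=
  (∀ X : V, ∀ a b : R, act X (a + b) = act X a + act X b) ∧
  (∀ X : V, ∀ a b : R, act X (a * b) = act X a * b + a * act X b) ∧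
  (∀ X Y : V, ∀ a : R, act (X + Y) a = act X a + act Y a) ∧
  (∀ f : R, ∀ X : V, ∀ a : R, act (f • X) a = f * act X a)

def IsAffineConnection {R : Type*} [CommRing R] {V : Type*} [AddCommGroup V] [Module R V]
    (act : V → R → R) (D : V → V → V) : Prop :=
  (∀ X Y Z : V, D (X + Y) Z = D X Z + D Y Z) ∧
  (∀ f : R, ∀ X Y : V, D (f • X) Y = f • D X Y) ∧
  (∀ X Y Z : V, D X (Y + Z) = D X Y + D X Z) ∧
  (∀ X : V, ∀ f : R, ∀ Y : V, D X (f • Y) = act X f • Y + f • D X Y)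

def IsMetric {R : Type*} [CommRing R] {V : Type*} [AddCommGroup V] [Module R V]
    (g : V → V → R) : Prop :=
  (∀ X Y : V, g X Y = g Y X) ∧
  (∀ X Y Z : V, g (X + Y) Z = g X Z + g Y Z) ∧
  (∀ f : R, ∀ X Y : V, g (f • X) Y = f * g X Y)

def IsDualPair {R : Type*} [CommRing R] {V : Type*} [AddCommGroup V] [Module R V]
    (g : V → V → R) (act : V → R → R) (D D' : V → V → V) : Prop :=
  ∀ Z X Y : V, act Z (g X Y) = g (D Z X) Y + g X (D' Z Y)

def IsTorsionFree {V : Type*} [AddCommGroup V]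
    (bracket : V → V → V) (D : V → V → V) : Prop :=
  ∀ X Y : V, D X Y - D Y X = bracket X Y

/-- The Levi-Civita connection of `g`: the (unique) torsion-free affine
connection that is self-dual (i.e. metric) with respect to `g`. -/
def IsLeviCivita {R : Type*} [CommRing R] {V : Type*} [AddCommGroup V] [Module R V]
    (g : V → V → R) (act : V → R → R) (bracket : V → V → V) (D : V → V → V) : Prop :=
  IsAffineConnection act D ∧ IsTorsionFree bracket D ∧ IsDualPair g act D D

/-- Warped product of statistical manifolds. The base `B` and
fibre `F` are modelled by their modules of vector fields `VB, VF` over the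
function rings `RB, RF`; the warped product `M = B ×_f F` by `VM` over `RM`,
together with the pullback ring morphisms `liftB = π*`, `liftF = σ*` and the
horizontal/vertical lifts `hB`, `hF` of vector fields, which generate `VM`.
If `(∇_B, ∇_B*)` and `(∇_F, ∇_F*)` are torsion-free dual structures and the
connections `Df, Df'` on `M` satisfy the warped-product (O'Neill) lifting
formulas, then `(Df, Df')` is a torsion-free dual structure on `(B ×_f F, g_f)`. -/
theorem warped_product_dual_structure
    {RB VB RF VF RM VM : Type*}
    [CommRing RB] [AddCommGroup VB] [Module RB VB]
    [CommRing RF] [AddCommGroup VF] [Module RF VF]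
    [CommRing RM] [AddCommGroup VM] [Module RM VM]
    -- base data
    (actB : VB → RB → RB) (bracketB : VB → VB → VB) (gB : VB → VB → RB)
    (DB DB' : VB → VB → VB)
    (actF : VF → RF → RF) (bracketF : VF → VF → VF) (gF : VF → VF → RF)
    (DF DF' : VF → VF → VF)
    -- warped product data
    (actM : VM → RM → RM) (bracketM : VM → VM → VM) (gf : VM → VM → RM)
    (Df Df' : VM → VM → VM)
    (liftB : RB →+* RM) (liftF : RF →+* RM) (hB : VB → VM) (hF : VF → VM)
    -- the warping function, positive (hence invertible), with its gradient
    (f finv : RB) (hfinv : f * finv = 1) (gradf : VB)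
    (hgrad : ∀ X : VB, gB gradf X = actB X f)
    -- statistical structures on the factors
    (hactB : IsDerivAction actB) (hgB : IsMetric gB)
    (hDB : IsAffineConnection actB DB) (hDB' : IsAffineConnection actB DB')
    (hTFB : IsTorsionFree bracketB DB) (hTFB' : IsTorsionFree bracketB DB')
    (hdualB : IsDualPair gB actB DB DB')
    (hactF : IsDerivAction actF) (hgF : IsMetric gF)
    (hDF : IsAffineConnection actF DF) (hDF' : IsAffineConnection actF DF')
    (hTFF : IsTorsionFree bracketF DF) (hTFF' : IsTorsionFree bracketF DF')
    (hdualF : IsDualPair gF actF DF DF')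
    -- structure on the warped product
    (hactM : IsDerivAction actM) (hgf : IsMetric gf)
    (hDf : IsAffineConnection actM Df) (hDf' : IsAffineConnection actM Df')
    (hbrM1 : ∀ X Y : VM, bracketM X Y = - bracketM Y X)
    (hbrM2 : ∀ X X' Y : VM, bracketM (X + X') Y = bracketM X Y + bracketM X' Y)
    (hbrM3 : ∀ a : RM, ∀ X Y : VM,
      bracketM (a • X) Y = a • bracketM X Y - actM Y a • X)
    -- the lifts are module morphisms and generate the vector fields of M
    (hBadd : ∀ X Y : VB, hB (X + Y) = hB X + hB Y)
    (hBsmul : ∀ a : RB, ∀ X : VB, hB (a • X) = liftB a • hB X)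
    (hFadd : ∀ U V : VF, hF (U + V) = hF U + hF V)
    (hFsmul : ∀ b : RF, ∀ U : VF, hF (b • U) = liftF b • hF U)
    (hspan : Submodule.span RM (Set.range hB ∪ Set.range hF) = ⊤)
    -- brackets of lifts
    (hbrBB : ∀ X Y : VB, bracketM (hB X) (hB Y) = hB (bracketB X Y))
    (hbrFF : ∀ U V : VF, bracketM (hF U) (hF V) = hF (bracketF U V))
    (hbrBF : ∀ X : VB, ∀ U : VF, bracketM (hB X) (hF U) = 0)
    -- action of lifted fields on (separable) functions
    (hactBB : ∀ X : VB, ∀ a : RB, actM (hB X) (liftB a) = liftB (actB X a))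
    (hactBF : ∀ X : VB, ∀ b : RF, actM (hB X) (liftF b) = 0)
    (hactFF : ∀ U : VF, ∀ b : RF, actM (hF U) (liftF b) = liftF (actF U b))
    (hactFB : ∀ U : VF, ∀ a : RB, actM (hF U) (liftB a) = 0)
    -- the warped metric `g_f = π*g_B + f̃² σ*g_F` on lifts
    (hgBB : ∀ X Y : VB, gf (hB X) (hB Y) = liftB (gB X Y))
    (hgFF : ∀ U V : VF, gf (hF U) (hF V) = liftB (f * f) * liftF (gF U V))
    (hgBF : ∀ X : VB, ∀ U : VF, gf (hB X) (hF U) = 0)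
    -- O'Neill lifting formulas for `Df`
    (hDfBB : ∀ X Y : VB, Df (hB X) (hB Y) = hB (DB X Y))
    (hDfBF : ∀ X : VB, ∀ U : VF,
      Df (hB X) (hF U) = liftB (finv * actB X f) • hF U)
    (hDfFB : ∀ U : VF, ∀ X : VB,
      Df (hF U) (hB X) = liftB (finv * actB X f) • hF U)
    (hDfFF : ∀ U V : VF,
      Df (hF U) (hF V)
        = hF (DF U V) - (liftB f * liftF (gF U V)) • hB gradf)
    -- O'Neill lifting formulas for `Df'`
    (hDf'BB : ∀ X Y : VB, Df' (hB X) (hB Y) = hB (DB' X Y))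
    (hDf'BF : ∀ X : VB, ∀ U : VF,
      Df' (hB X) (hF U) = liftB (finv * actB X f) • hF U)
    (hDf'FB : ∀ U : VF, ∀ X : VB,
      Df' (hF U) (hB X) = liftB (finv * actB X f) • hF U)
    (hDf'FF : ∀ U V : VF,
      Df' (hF U) (hF V)
        = hF (DF' U V) - (liftB f * liftF (gF U V)) • hB gradf) :
    IsTorsionFree bracketM Df ∧ IsTorsionFree bracketM Df' ∧
      IsDualPair gf actM Df Df' := by
  classical
  obtain ⟨actM_add, actM_mul, actM_addv, actM_smulv⟩ := hactM
  obtain ⟨gf_symm, gf_add1, gf_smul1⟩ := hgf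
  obtain ⟨Df_add1, Df_smul1, Df_add2, Df_leib⟩ := hDf
  obtain ⟨Df'_add1, Df'_smul1, Df'_add2, Df'_leib⟩ := hDf'
  -- derived facts
  have act0 : ∀ X : VM, actM X 0 = 0 := by
    intro X
    have h := actM_add X 0 0
    simpa using h
  have gf_add2 : ∀ X Y Z : VM, gf X (Y + Z) = gf X Y + gf X Z := by
    intro X Y Z; rw [gf_symm, gf_add1, gf_symm Y X, gf_symm Z X]
  have gf_smul2 : ∀ (a : RM) (X Y : VM), gf X (a • Y) = a * gf X Y := by
    intro a X Y; rw [gf_symm, gf_smul1, gf_symm Y X]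
  have gf_sub1 : ∀ X Y Z : VM, gf (X - Y) Z = gf X Z - gf Y Z := by
    intro X Y Z
    have h := gf_add1 Y (X - Y) Z
    rw [add_sub_cancel] at h
    linear_combination -h
  have gf_sub2 : ∀ X Y Z : VM, gf X (Y - Z) = gf X Y - gf X Z := by
    intro X Y Z
    have h := gf_add2 X Z (Y - Z)
    rw [add_sub_cancel] at h
    linear_combination -h
  have hgFB : ∀ (U : VF) (X : VB), gf (hF U) (hB X) = 0 := by
    intro U X; rw [gf_symm, hgBF]
  have br_add2 : ∀ X Y Y' : VM, bracketM X (Y + Y') = bracketM X Y + bracketM X Y' := by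
    intro X Y Y'
    rw [hbrM1, hbrM2, hbrM1 Y X, hbrM1 Y' X]
    abel
  have br_smul2 : ∀ (a : RM) (X Y : VM),
      bracketM X (a • Y) = a • bracketM X Y + actM X a • Y := by
    intro a X Y
    rw [hbrM1, hbrM3, hbrM1 Y X, smul_neg]
    abel
  have hfinvM : liftB f * liftB finv = 1 := by rw [← map_mul, hfinv, map_one]
  have hB0 : hB 0 = 0 := by
    have h := hBadd 0 0
    simpa using h
  have hBsub : ∀ X Y : VB, hB (X - Y) = hB X - hB Y := by
    intro X Y
    have h := hBadd Y (X - Y)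
    rw [add_sub_cancel] at h
    rw [h]; abel
  have hF0 : hF 0 = 0 := by
    have h := hFadd 0 0
    simpa using h
  have hFsub : ∀ X Y : VF, hF (X - Y) = hF X - hF Y := by
    intro X Y
    have h := hFadd Y (X - Y)
    rw [add_sub_cancel] at h
    rw [h]; abel
  -- generic torsion-freeness for warped-product-type connections
  have TFkey : ∀ (D : VM → VM → VM) (DBx : VB → VB → VB) (DFx : VF → VF → VF),
      IsAffineConnection actM D →
      IsTorsionFree bracketB DBx → IsTorsionFree bracketF DFx →
      (∀ X Y : VB, D (hB X) (hB Y) = hB (DBx X Y)) →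
      (∀ (X : VB) (U : VF), D (hB X) (hF U) = liftB (finv * actB X f) • hF U) →
      (∀ (U : VF) (X : VB), D (hF U) (hB X) = liftB (finv * actB X f) • hF U) →
      (∀ U V : VF, D (hF U) (hF V)
        = hF (DFx U V) - (liftB f * liftF (gF U V)) • hB gradf) →
      IsTorsionFree bracketM D := by
    intro D DBx DFx hD hTB hTF hBB hBF hFB hFF
    obtain ⟨D_add1, D_smul1, D_add2, D_leib⟩ := hD
    have main : ∀ X Y : VM, D X Y - D Y X - bracketM X Y = 0 := by
      refine bilin_zero hspan (fun X Y => D X Y - D Y X - bracketM X Y) ?_ ?_ ?_ ?_ ?_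
      · intro x y z
        simp only [D_add1, D_add2, hbrM2]
        abel
      · intro a x z
        simp only [D_smul1, D_leib, hbrM3, smul_sub]
        abel
      · intro x y z
        simp only [D_add1, D_add2, br_add2]
        abel
      · intro a x z
        simp only [D_smul1, D_leib, br_smul2, smul_sub, smul_add]
        abel
      · rintro x (⟨X, rfl⟩ | ⟨U, rfl⟩) y (⟨Y, rfl⟩ | ⟨V, rfl⟩) <;> beta_reduce
        · rw [hBB, hBB, hbrBB, ← hTB X Y, hBsub]
          abel
        · rw [hBF, hFB, hbrBF]
          abel
        · rw [hFB, hBF, hbrM1, hbrBF, neg_zero]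
          abel
        · rw [hFF, hFF, hbrFF, ← hTF U V, hFsub, hgF.1 V U]
          abel
    intro X Y
    have h := main X Y
    exact sub_eq_zero.mp h
  refine ⟨TFkey Df DB DF ⟨Df_add1, Df_smul1, Df_add2, Df_leib⟩ hTFB hTFF
      hDfBB hDfBF hDfFB hDfFF,
    TFkey Df' DB' DF' ⟨Df'_add1, Df'_smul1, Df'_add2, Df'_leib⟩ hTFB' hTFF'
      hDf'BB hDf'BF hDf'FB hDf'FF, ?_⟩
  -- duality
  have main : ∀ z x y : VM,
      actM z (gf x y) - gf (Df z x) y - gf x (Df' z y) = 0 := by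
    refine trilin_zero hspan
      (fun z x y => actM z (gf x y) - gf (Df z x) y - gf x (Df' z y))
      ?_ ?_ ?_ ?_ ?_ ?_ ?_
    · intro z z' x y
      simp only [actM_addv, Df_add1, Df'_add1, gf_add1, gf_add2]
      ring
    · intro a z x y
      simp only [actM_smulv, Df_smul1, Df'_smul1, gf_smul1, gf_smul2]
      ring
    · intro z x x' y
      simp only [gf_add1, actM_add, Df_add2, gf_add2]
      ring
    · intro a z x y
      simp only [gf_smul1, actM_mul, Df_leib, gf_add1, gf_smul2]
      ring
    · intro z x y y'
      simp only [gf_add2, actM_add, Df'_add2, gf_add1]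
      ring
    · intro a z x y
      simp only [gf_smul2, actM_mul, Df'_leib, gf_add2, gf_smul1]
      ring
    · rintro z (⟨Z, rfl⟩ | ⟨W, rfl⟩) x (⟨X, rfl⟩ | ⟨U, rfl⟩) y (⟨Y, rfl⟩ | ⟨V, rfl⟩) <;>
        beta_reduce
      · -- (B,B,B)
        rw [hgBB, hactBB, hDfBB, hDf'BB, hgBB, hgBB, hdualB Z X Y, map_add]
        ring
      · -- (B,B,F)
        rw [hgBF, act0, hDfBB, hgBF, hDf'BF, gf_smul2, hgBF]
        ring
      · -- (B,F,B)
        rw [hgFB, act0, hDfBF, gf_smul1, hgFB, hDf'BB, hgFB]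
        ring
      · -- (B,F,F)
        rw [hgFF, actM_mul, hactBB, hactBF, hDfBF, hDf'BF, gf_smul1, hgFF,
          gf_smul2, hgFF, hactB.2.1 Z f f]
        simp only [map_add, map_mul]
        linear_combination (-2 * liftB (actB Z f) * liftB f * liftF (gF U V)) * hfinvM
      · -- (F,B,B)
        rw [hgBB, hactFB, hDfFB, gf_smul1, hgFB, hDf'FB, gf_smul2, hgBF]
        ring
      · -- (F,B,F)
        rw [hgBF, act0, hDfFB, gf_smul1, hgFF, hDf'FF, gf_sub2, hgBF, gf_smul2,
          hgBB, hgB.1 X gradf, hgrad X]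
        simp only [map_mul]
        linear_combination (-(liftB (actB X f)) * liftB f * liftF (gF W V)) * hfinvM
      · -- (F,F,B)
        rw [hgFB, act0, hDfFF, gf_sub1, hgFB, gf_smul1, hgBB, hgrad Y,
          hDf'FB, gf_smul2, hgFF, hgF.1 U W]
        simp only [map_mul]
        linear_combination (-(liftB (actB Y f)) * liftB f * liftF (gF W U)) * hfinvM
      · -- (F,F,F)
        rw [hgFF, actM_mul, hactFB, hactFF, hDfFF, hDf'FF, gf_sub1, gf_sub2,
          hgFF, hgFF, gf_smul1, hgBF, gf_smul2, hgFB, hdualF W U V, map_add]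
        ring
  intro Z X Y
  have h := main Z X Y
  linear_combination h
end

section
/- Let D^B and D^F be divergence functions on manifolds B and F, and f > 0 a smooth function on B. Then D^f((p_B,p_F),(q_B,q_F)) := D^B(p_B,q_B) + f(p_B)² D^F(p_F,q_F) is a divergence function on B × F: it is nonnegative, vanishes on the diagonal, and its second mixed derivative X¹Y²D^f restricted to the diagonal is positive definite. -/
/-- The second mixed derivative `(X¹Y²D)|_Δ` of a two-point function
`D : M × M → ℝ` at the diagonal point `(p,p)`, in the (constant) directions
`v` (first factor) and `w` (second factor). -/
noncomputable def secondMixed {E : Type*} [NormedAddCommGroup E] [NormedSpace ℝ E]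
    (D : E × E → ℝ) (p : E) (v w : E) : ℝ :=
  fderiv ℝ (fun q => fderiv ℝ (fun x => D (x, q)) p v) p w

/-- A divergence function: smooth, nonnegative, vanishing on the diagonal, and
with positive definite second mixed derivative form `−(X¹Y²D)|_Δ`. -/
def IsDivergence {E : Type*} [NormedAddCommGroup E] [NormedSpace ℝ E]
    (D : E × E → ℝ) : Prop :=
  ContDiff ℝ (⊤ : ℕ∞) D ∧
  (∀ p q : E, 0 ≤ D (p, q)) ∧
  (∀ p : E, D (p, p) = 0) ∧
  (∀ p v : E, v ≠ 0 → 0 < -secondMixed D p v v)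


section helpers
variable {E : Type*} [NormedAddCommGroup E] [NormedSpace ℝ E]

/-- first-slot derivative via total derivative -/
lemma fderiv_first_slot (D : E × E → ℝ) (hD : ContDiff ℝ (⊤ : ℕ∞) D) (p q v : E) :
    fderiv ℝ (fun x => D (x, q)) p v = fderiv ℝ D (p, q) (v, 0) := by
  have h1 : HasFDerivAt (fun x : E => (x, q))
      ((ContinuousLinearMap.id ℝ E).prod 0) p :=
    (hasFDerivAt_id p).prodMk (hasFDerivAt_const q p)
  have h2 := (hD.differentiable (by simp) (p, q)).hasFDerivAt
  have := (h2.comp p h1).fderiv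
  rw [show (fun x => D (x, q)) = D ∘ fun x => (x, q) from rfl, this]
  simp

lemma second_slot_deriv_zero (D : E × E → ℝ)
    (hnn : ∀ p q : E, 0 ≤ D (p, q)) (hdiag : ∀ p : E, D (p, p) = 0) (p : E) :
    fderiv ℝ (fun q => D (p, q)) p = 0 := by
  apply IsLocalMin.fderiv_eq_zero
  apply Filter.Eventually.of_forall
  intro q
  simp [hdiag p, hnn p q]

lemma secondMixed_zero_left (D : E × E → ℝ) (p w : E) :
    secondMixed D p 0 w = 0 := by
  unfold secondMixed
  have : (fun q => fderiv ℝ (fun x => D (x, q)) p 0) = fun _ => (0 : ℝ) := by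
    funext q; simp
  rw [this]
  simp

end helpers
section main
variable {EB : Type*} [NormedAddCommGroup EB] [NormedSpace ℝ EB]
  {EF : Type*} [NormedAddCommGroup EF] [NormedSpace ℝ EF]

lemma secondMixed_warped (DB : EB × EB → ℝ) (DF : EF × EF → ℝ) (f : EB → ℝ)
    (hf : ContDiff ℝ (⊤ : ℕ∞) f) (hDBc : ContDiff ℝ (⊤ : ℕ∞) DB) (hDFc : ContDiff ℝ (⊤ : ℕ∞) DF)
    (hnn : ∀ p q : EF, 0 ≤ DF (p, q)) (hdiag : ∀ p : EF, DF (p, p) = 0)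
    (pB vB wB : EB) (pF vF wF : EF) :
    secondMixed (fun pq : (EB × EF) × (EB × EF) =>
      DB (pq.1.1, pq.2.1) + (f pq.1.1) ^ 2 * DF (pq.1.2, pq.2.2))
      (pB, pF) (vB, vF) (wB, wF)
    = secondMixed DB pB vB wB + f pB ^ 2 * secondMixed DF pF vF wF := by
  set gB : EB → ℝ := fun q1 => fderiv ℝ (fun b => DB (b, q1)) pB vB with hgBdef
  set gF : EF → ℝ := fun q2 => fderiv ℝ (fun b => DF (b, q2)) pF vF with hgFdef
  set c : ℝ := 2 * f pB * fderiv ℝ f pB vB with hcdef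
  -- Step A
  have stepA : ∀ q : EB × EF,
      fderiv ℝ (fun x : EB × EF => DB (x.1, q.1) + f x.1 ^ 2 * DF (x.2, q.2))
        (pB, pF) (vB, vF)
      = gB q.1 + c * DF (pF, q.2) + f pB ^ 2 * gF q.2 := by
    intro q
    have hB1 : HasFDerivAt (fun b => DB (b, q.1))
        (fderiv ℝ (fun b => DB (b, q.1)) pB) pB :=
      (((hDBc.comp (contDiff_id.prodMk contDiff_const)).differentiable (by simp)) pB).hasFDerivAt
    have hF1 : HasFDerivAt (fun b => DF (b, q.2))
        (fderiv ℝ (fun b => DF (b, q.2)) pF) pF :=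
      (((hDFc.comp (contDiff_id.prodMk contDiff_const)).differentiable (by simp)) pF).hasFDerivAt
    have hf1 : HasFDerivAt (fun x : EB × EF => f x.1)
        ((fderiv ℝ f pB).comp (ContinuousLinearMap.fst ℝ EB EF)) (pB, pF) :=
      ((hf.differentiable (by simp) pB).hasFDerivAt).comp _ (hasFDerivAt_fst)
    have h1 : HasFDerivAt (fun x : EB × EF => DB (x.1, q.1))
        ((fderiv ℝ (fun b => DB (b, q.1)) pB).comp (ContinuousLinearMap.fst ℝ EB EF))
        (pB, pF) := by have := hB1.comp (f := Prod.fst) (pB, pF) hasFDerivAt_fst; exact this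
    have h3 : HasFDerivAt (fun x : EB × EF => DF (x.2, q.2))
        ((fderiv ℝ (fun b => DF (b, q.2)) pF).comp (ContinuousLinearMap.snd ℝ EB EF))
        (pB, pF) := by have := hF1.comp (f := Prod.snd) (pB, pF) hasFDerivAt_snd; exact this
    have h2 : HasFDerivAt (fun x : EB × EF => f x.1 ^ 2)
        ((f pB) • ((fderiv ℝ f pB).comp (ContinuousLinearMap.fst ℝ EB EF))
          + (f pB) • ((fderiv ℝ f pB).comp (ContinuousLinearMap.fst ℝ EB EF))) (pB, pF) := by
      have := hf1.fun_mul hf1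
      simpa [pow_two] using this
    have h4 := h2.fun_mul h3
    have h := h1.fun_add h4
    rw [h.fderiv]
    simp [gB, gF, c]
    ring
  -- Step B
  have hgBeq : gB = fun q1 => fderiv ℝ DB (pB, q1) (vB, 0) :=
    funext fun q1 => fderiv_first_slot DB hDBc pB q1 vB
  have hgFeq : gF = fun q2 => fderiv ℝ DF (pF, q2) (vF, 0) :=
    funext fun q2 => fderiv_first_slot DF hDFc pF q2 vF
  have hgB : Differentiable ℝ gB := by
    rw [hgBeq]
    exact (((hDBc.fderiv_right (m := (⊤ : ℕ∞)) (by simp)).comp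
      (contDiff_const.prodMk contDiff_id)).clm_apply contDiff_const).differentiable (by simp)
  have hgF : Differentiable ℝ gF := by
    rw [hgFeq]
    exact (((hDFc.fderiv_right (m := (⊤ : ℕ∞)) (by simp)).comp
      (contDiff_const.prodMk contDiff_id)).clm_apply contDiff_const).differentiable (by simp)
  have t1 : HasFDerivAt (fun q : EB × EF => gB q.1)
      ((fderiv ℝ gB pB).comp (ContinuousLinearMap.fst ℝ EB EF)) (pB, pF) :=
    by have := (hgB pB).hasFDerivAt.comp (f := Prod.fst) (pB, pF) hasFDerivAt_fst; exact this
  have hd0 : HasFDerivAt (fun q2 => DF (pF, q2)) (0 : EF →L[ℝ] ℝ) pF := by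
    have hd : DifferentiableAt ℝ (fun q2 => DF (pF, q2)) pF :=
      (hDFc.comp (contDiff_const.prodMk contDiff_id)).differentiable (by simp) pF
    have := hd.hasFDerivAt
    rwa [second_slot_deriv_zero DF hnn hdiag pF] at this
  have t2 : HasFDerivAt (fun q : EB × EF => c * DF (pF, q.2))
      (c • ((0 : EF →L[ℝ] ℝ).comp (ContinuousLinearMap.snd ℝ EB EF))) (pB, pF) :=
    by have := (hd0.comp (f := Prod.snd) (pB, pF) hasFDerivAt_snd).const_mul c; exact this
  have t3 : HasFDerivAt (fun q : EB × EF => f pB ^ 2 * gF q.2)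
      ((f pB ^ 2) • ((fderiv ℝ gF pF).comp (ContinuousLinearMap.snd ℝ EB EF))) (pB, pF) :=
    by have := ((hgF pF).hasFDerivAt.comp (f := Prod.snd) (pB, pF) hasFDerivAt_snd).const_mul (f pB ^ 2); exact this
  have t := (t1.fun_add t2).fun_add t3
  have key : secondMixed (fun pq : (EB × EF) × (EB × EF) =>
      DB (pq.1.1, pq.2.1) + (f pq.1.1) ^ 2 * DF (pq.1.2, pq.2.2))
      (pB, pF) (vB, vF) (wB, wF)
      = fderiv ℝ (fun q : EB × EF => gB q.1 + c * DF (pF, q.2) + f pB ^ 2 * gF q.2)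
        (pB, pF) (wB, wF) := by
    show fderiv ℝ (fun q : EB × EF =>
        fderiv ℝ (fun x : EB × EF => DB (x.1, q.1) + f x.1 ^ 2 * DF (x.2, q.2))
          (pB, pF) (vB, vF)) (pB, pF) (wB, wF) = _
    rw [funext stepA]
  rw [key, t.fderiv]
  have e1 : fderiv ℝ gB pB wB = secondMixed DB pB vB wB := rfl
  have e2 : fderiv ℝ gF pF wF = secondMixed DF pF vF wF := rfl
  simp [e1, e2]

end main

lemma neg_secondMixed_nonneg {E : Type*} [NormedAddCommGroup E] [NormedSpace ℝ E]
    (D : E × E → ℝ) (hD : IsDivergence D) (p v : E) :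
    0 ≤ -secondMixed D p v v := by
  rcases eq_or_ne v 0 with h | h
  · simp [h, secondMixed_zero_left]
  · exact (hD.2.2.2 p v h).le

/-- If `D^B`, `D^F` are divergences on `B`, `F` and `f > 0`
is smooth on `B`, then
`D^f((p_B,p_F),(q_B,q_F)) = D^B(p_B,q_B) + f(p_B)² D^F(p_F,q_F)` is a
divergence on `B × F`. -/
theorem warped_divergence_is_divergence
    {EB : Type*} [NormedAddCommGroup EB] [NormedSpace ℝ EB]
    {EF : Type*} [NormedAddCommGroup EF] [NormedSpace ℝ EF]
    (DB : EB × EB → ℝ) (DF : EF × EF → ℝ) (f : EB → ℝ)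
    (hf : ContDiff ℝ (⊤ : ℕ∞) f) (hfpos : ∀ p, 0 < f p)
    (hDB : IsDivergence DB) (hDF : IsDivergence DF) :
    IsDivergence (fun pq : (EB × EF) × (EB × EF) =>
      DB (pq.1.1, pq.2.1) + (f pq.1.1) ^ 2 * DF (pq.1.2, pq.2.2)) := by
  obtain ⟨hDBc, hDBnn, hDBdiag, hDBpos⟩ := hDB
  obtain ⟨hDFc, hDFnn, hDFdiag, hDFpos⟩ := hDF
  refine ⟨?_, ?_, ?_, ?_⟩
  · exact (hDBc.comp ((contDiff_fst.fst).prodMk (contDiff_snd.fst))).add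
      (((hf.comp contDiff_fst.fst).pow 2).mul
        (hDFc.comp ((contDiff_fst.snd).prodMk (contDiff_snd.snd))))
  · intro p q
    exact add_nonneg (hDBnn _ _) (mul_nonneg (sq_nonneg _) (hDFnn _ _))
  · intro p
    simp [hDBdiag, hDFdiag]
  · rintro ⟨pB, pF⟩ ⟨vB, vF⟩ hv
    rw [secondMixed_warped DB DF f hf hDBc hDFc hDFnn hDFdiag, neg_add]
    by_cases hB : vB = 0
    · have hF : vF ≠ 0 := by
        intro hF; exact hv (by simp [Prod.ext_iff, hB, hF])
      apply add_pos_of_nonneg_of_pos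
      · exact neg_secondMixed_nonneg DB ⟨hDBc, hDBnn, hDBdiag, hDBpos⟩ pB vB
      · rw [neg_mul_eq_mul_neg]
        exact mul_pos (pow_pos (hfpos pB) 2) (hDFpos pF vF hF)
    · apply add_pos_of_pos_of_nonneg (hDBpos pB vB hB)
      rw [neg_mul_eq_mul_neg]
      exact mul_nonneg (sq_nonneg _)
        (neg_secondMixed_nonneg DF ⟨hDFc, hDFnn, hDFdiag, hDFpos⟩ pF vF)
end
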